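/- Let E be a nonempty finite type, let T > 0, and let Q : ℝ → Matrix E E ℝ be continuous on [0,T] and satisfy, for every t ∈ [0,T]: Q(t)(e,e') ≥ 0 whenever e ≠ e', and ∑_{e'} Q(t)(e,e') = 0 for every e. Suppose p : ℝ → (E → ℝ) is differentiable on [0,T] with derivative p'(t) = p(t) ᵥ* Q(t) (i.e., p'(t)(e') = ∑_e p(t)(e)·Q(t)(e,e') for every e') for all t ∈ [0,T], and p(0) is a probability vector (p(0)(e) ≥ 0 for all e and ∑_e p(0)(e) = 1). Then for every t ∈ [0,T], p(t) is a probability vector: p(t)(e) ≥ 0 for all e ∈ E and ∑_e p(t)(e) = 1. -/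

import Mathlib

/-!
Summing the equation over the states gives `d/dt ∑ₑ p t e = p t ⬝ᵥ (Q t *ᵥ 1) = 0`, so the total
mass is conserved. For nonnegativity, perturb `p` to `p + ε e^{Kt} 𝟙` with `K` above every column
sum of `Q` on `[0, T]`. At a time where some coordinate of the perturbed vector first reaches zero,
the off-diagonal signs of `Q` make the `p ᵥ* Q` part of its derivative at least `-ε e^{Kt}` times
a column sum, which the perturbation outruns, so the coordinate is strictly increasing there:
it never becomes negative. Letting `ε → 0` gives `p ≥ 0`.
-/

open Set Filter Topology Matrix

theorem HasDerivWithinAt.eventually_lt_nhdsGT {f : ℝ → ℝ} {f' x : ℝ}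
    (hf : HasDerivWithinAt f f' (Ioi x) x) (hf' : 0 < f') : ∀ᶠ z in 𝓝[>] x, f x < f z := by
  have hslope := (hasDerivWithinAt_iff_tendsto_slope' (lt_irrefl x)).1 hf
  filter_upwards [hslope.eventually_const_lt hf', self_mem_nhdsWithin] with z hz hxz
  rw [slope_def_field] at hz
  exact sub_pos.1 ((div_pos_iff_of_pos_right (sub_pos.2 hxz)).1 hz)

theorem nonneg_of_hasDerivWithinAt_of_apply_eq_zero {ι : Type*} [Fintype ι]
    {g g' : ℝ → ι → ℝ} {a b : ℝ}
    (hg : ∀ t ∈ Icc a b, HasDerivWithinAt g (g' t) (Icc a b) t) (ha : 0 ≤ g a)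
    (hbdry : ∀ t ∈ Ico a b, 0 ≤ g t → ∀ i, g t i = 0 → 0 < g' t i) :
    ∀ t ∈ Icc a b, 0 ≤ g t := by
  have hclosed : IsClosed (g ⁻¹' Ici 0 ∩ Icc a b) := by
    rw [inter_comm]
    exact ContinuousOn.preimage_isClosed_of_isClosed (fun t ht => (hg t ht).continuousWithinAt)
      isClosed_Icc isClosed_Ici
  refine fun t ht => hclosed.Icc_subset_of_forall_mem_nhdsWithin ha ?_ ht
  rintro x ⟨hx0 : 0 ≤ g x, hx⟩
  have hIcc : Icc a b ∈ 𝓝[>] x := nhdsWithin_mono x Ioi_subset_Ici_self (Icc_mem_nhdsGE_of_mem hx)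
  have hgx := hasDerivWithinAt_pi.1 (hg x (Ico_subset_Icc_self hx))
  refine eventually_all.2 fun i => ?_
  rcases (hx0 i).eq_or_lt with hzero | hpos
  · filter_upwards [((hgx i).mono_of_mem_nhdsWithin hIcc).eventually_lt_nhdsGT
      (hbdry x hx hx0 i hzero.symm)] with z hz
    exact hzero.trans_lt hz |>.le
  · exact ((hgx i).continuousWithinAt.eventually_const_lt hpos).filter_mono
      (nhdsWithin_le_of_mem hIcc) |>.mono fun z hz => hz.le

theorem sum_vecMul_eq_zero {m n R : Type*} [Fintype m] [Fintype n] [Semiring R] (v : m → R)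
    {M : Matrix m n R} (hM : ∀ i, ∑ j, M i j = 0) : ∑ j, (v ᵥ* M) j = 0 := by
  have hM1 : M *ᵥ 1 = 0 := funext fun i => by simpa [mulVec, dotProduct] using hM i
  rw [← dotProduct_one, ← dotProduct_mulVec, hM1, dotProduct_zero]

theorem vecMul_apply_nonneg_of_apply_eq_zero {n R : Type*} [Fintype n] [Semiring R]
    [PartialOrder R] [IsOrderedRing R] {v : n → R} {M : Matrix n n R} {j : n}
    (hv : 0 ≤ v) (hvj : v j = 0) (hM : ∀ i, i ≠ j → 0 ≤ M i j) : 0 ≤ (v ᵥ* M) j := by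
  refine Finset.sum_nonneg fun i _ => ?_
  rcases eq_or_ne i j with rfl | hij
  · simp [hvj]
  · exact mul_nonneg (hv i) (hM i hij)

theorem IsCompact.exists_forall_apply_lt {X ι : Type*} [TopologicalSpace X] [Fintype ι]
    {s : Set X} (hs : IsCompact s) {f : X → ι → ℝ} (hf : ContinuousOn f s) :
    ∃ K, ∀ x ∈ s, ∀ i, f x i < K := by
  obtain ⟨C, hC⟩ := hs.exists_bound_of_continuousOn hf
  exact ⟨C + 1, fun x hx i => ((le_abs_self _).trans ((norm_le_pi_norm (f x) i).trans
    (hC x hx))).trans_lt (lt_add_one C)⟩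

section Kolmogorov

variable {E : Type*} [Fintype E] {Q : ℝ → Matrix E E ℝ} {p : ℝ → E → ℝ} {a b : ℝ}

theorem sum_apply_eq_of_hasDerivWithinAt_vecMul
    (hQrow : ∀ t ∈ Icc a b, ∀ e, ∑ e', Q t e e' = 0)
    (hp : ∀ t ∈ Icc a b, HasDerivWithinAt p (p t ᵥ* Q t) (Icc a b) t) :
    ∀ t ∈ Icc a b, ∑ e, p t e = ∑ e, p a e := by
  have hsum : ∀ t ∈ Icc a b, HasDerivWithinAt (fun s => ∑ e, p s e) 0 (Icc a b) t := by
    intro t ht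
    rw [← sum_vecMul_eq_zero (p t) (hQrow t ht)]
    exact HasDerivWithinAt.fun_sum fun e _ => hasDerivWithinAt_pi.1 (hp t ht) e
  refine constant_of_has_deriv_right_zero (fun t ht => (hsum t ht).continuousWithinAt)
    fun t ht => ?_
  exact (hsum t (Ico_subset_Icc_self ht)).mono_of_mem_nhdsWithin (Icc_mem_nhdsGE_of_mem ht)

theorem add_smul_one_nonneg_of_hasDerivWithinAt_vecMul {K ε : ℝ} (hε : 0 < ε)
    (hK : ∀ t ∈ Icc a b, ∀ e, (1 ᵥ* Q t) e < K)
    (hQoff : ∀ t ∈ Icc a b, ∀ e e' : E, e ≠ e' → 0 ≤ Q t e e')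
    (hp : ∀ t ∈ Icc a b, HasDerivWithinAt p (p t ᵥ* Q t) (Icc a b) t) (hpa : 0 ≤ p a) :
    ∀ t ∈ Icc a b, 0 ≤ p t + (ε * Real.exp (K * t)) • 1 := by
  refine nonneg_of_hasDerivWithinAt_of_apply_eq_zero (g' := fun t =>
    p t ᵥ* Q t + (ε * (Real.exp (K * t) * K)) • 1) (fun t ht => ?_) ?_ ?_
  · have hexp : HasDerivAt (fun s => ε * Real.exp (K * s)) (ε * (Real.exp (K * t) * K)) t :=
      (((hasDerivAt_id t).const_mul K).exp.const_mul ε).congr_deriv (by simp)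
    exact (hp t ht).add (hexp.hasDerivWithinAt.smul_const (1 : E → ℝ))
  · exact add_nonneg hpa (smul_nonneg (by positivity) zero_le_one)
  · intro t ht hgt e hge
    have hvec : 0 ≤ ((p t + (ε * Real.exp (K * t)) • 1) ᵥ* Q t) e :=
      vecMul_apply_nonneg_of_apply_eq_zero hgt hge fun e' he' =>
        hQoff t (Ico_subset_Icc_self ht) e' e he'
    have hgap : 0 < ε * Real.exp (K * t) * (K - (1 ᵥ* Q t) e) :=
      mul_pos (by positivity) (sub_pos.2 (hK t (Ico_subset_Icc_self ht) e))
    rw [add_vecMul, smul_vecMul] at hvec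
    simp only [Pi.add_apply, Pi.smul_apply, smul_eq_mul, Pi.one_apply, mul_one] at hvec ⊢
    linarith

theorem nonneg_of_hasDerivWithinAt_vecMul
    (hQcont : ContinuousOn Q (Icc a b))
    (hQoff : ∀ t ∈ Icc a b, ∀ e e' : E, e ≠ e' → 0 ≤ Q t e e')
    (hp : ∀ t ∈ Icc a b, HasDerivWithinAt p (p t ᵥ* Q t) (Icc a b) t) (hpa : 0 ≤ p a) :
    ∀ t ∈ Icc a b, 0 ≤ p t := by
  obtain ⟨K, hK⟩ := isCompact_Icc.exists_forall_apply_lt (f := fun t => 1 ᵥ* Q t) (by fun_prop)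
  intro t ht e
  refine le_of_forall_pos_le_add fun δ hδ => ?_
  have := add_smul_one_nonneg_of_hasDerivWithinAt_vecMul (div_pos hδ (Real.exp_pos (K * t)))
    hK hQoff hp hpa t ht e
  simpa [div_mul_cancel₀ _ (Real.exp_pos _).ne'] using this

end Kolmogorov

theorem kfp_preserves_simplex_general {E : Type*} [Fintype E]
    (T : ℝ)
    (Q : ℝ → Matrix E E ℝ) (hQcont : ContinuousOn Q (Icc 0 T))
    (hQoff : ∀ t ∈ Icc (0:ℝ) T, ∀ e e' : E, e ≠ e' → 0 ≤ Q t e e')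
    (hQrow : ∀ t ∈ Icc (0:ℝ) T, ∀ e : E, ∑ e', Q t e e' = 0)
    (p : ℝ → E → ℝ)
    (hp : ∀ t ∈ Icc (0:ℝ) T, HasDerivWithinAt p (Matrix.vecMul (p t) (Q t)) (Icc 0 T) t)
    (hp0_nonneg : ∀ e, 0 ≤ p 0 e) (hp0_sum : ∑ e, p 0 e = 1) :
    ∀ t ∈ Icc (0:ℝ) T, (∀ e, 0 ≤ p t e) ∧ ∑ e, p t e = 1 := fun t ht =>
  ⟨nonneg_of_hasDerivWithinAt_vecMul hQcont hQoff hp hp0_nonneg t ht,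
    (sum_apply_eq_of_hasDerivWithinAt_vecMul hQrow hp t ht).trans hp0_sum⟩

/-- The Kolmogorov–Fokker–Planck forward flow `dp/dt = p ᵥ* Q(t)` with a
continuous rate matrix having nonnegative off-diagonal entries and zero row sums
preserves the probability simplex on the finite state space `E`. -/
theorem kfp_preserves_simplex {E : Type*} [Fintype E] [Nonempty E] [DecidableEq E]
    (T : ℝ) (hT : 0 < T)
    (Q : ℝ → Matrix E E ℝ) (hQcont : ContinuousOn Q (Icc 0 T))
    (hQoff : ∀ t ∈ Icc (0:ℝ) T, ∀ e e' : E, e ≠ e' → 0 ≤ Q t e e')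
    (hQrow : ∀ t ∈ Icc (0:ℝ) T, ∀ e : E, ∑ e', Q t e e' = 0)
    (p : ℝ → E → ℝ)
    (hp : ∀ t ∈ Icc (0:ℝ) T, HasDerivWithinAt p (Matrix.vecMul (p t) (Q t)) (Icc 0 T) t)
    (hp0_nonneg : ∀ e, 0 ≤ p 0 e) (hp0_sum : ∑ e, p 0 e = 1) :
    ∀ t ∈ Icc (0:ℝ) T, (∀ e, 0 ≤ p t e) ∧ ∑ e, p t e = 1 :=
  kfp_preserves_simplex_general T Q hQcont hQoff hQrow p hp hp0_nonneg hp0_sum
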